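/- Let ξ ∈ F× be a nonsquare in F, and let G_γ be the subgroup of GL₃(F) consisting of matrices of the form [[a, bξ, 0], [b, a, 0], [0, 0, c]] with a, b, c ∈ F and c(a² − b²ξ) ≠ 0. Then the set {(x + u·d + v·d², y + d) : x, y, u ∈ F, v ∈ F×} is a fundamental domain for the action of G_γ on H_q: every (α, β) ∈ H_q lies in the G_γ-orbit of exactly one element of this set. -/

import Mathlib

/-- The finite upper half-space: pairs `(α, β)` with `1, α, β` linearly
independent over `F`. -/
def UHS (F : Type*) [Field F] (E : Type*) [Field E] [Algebra F E] : Set (E × E) :=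
  {z | LinearIndependent F ![1, z.1, z.2]}

/-- The denominator of the fractional linear action. -/
def mden (F : Type*) [Field F] (E : Type*) [Field E] [Algebra F E]
    (M : Matrix (Fin 3) (Fin 3) F) (z : E × E) : E :=
  algebraMap F E (M 2 0) * z.1 + algebraMap F E (M 2 1) * z.2 + algebraMap F E (M 2 2)

/-- The fractional linear action of a `3 × 3` matrix on a pair. -/
def mact (F : Type*) [Field F] (E : Type*) [Field E] [Algebra F E]
    (M : Matrix (Fin 3) (Fin 3) F) (z : E × E) : E × E :=
  ((algebraMap F E (M 0 0) * z.1 + algebraMap F E (M 0 1) * z.2 + algebraMap F E (M 0 2)) /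
      mden F E M z,
   (algebraMap F E (M 1 0) * z.1 + algebraMap F E (M 1 1) * z.2 + algebraMap F E (M 1 2)) /
      mden F E M z)

/-!
Writing `α = A₀ + A₁d + A₂d²` and `β = B₀ + B₁d + B₂d²`, an element
`[[a, bξ, 0], [b, a, 0], [0, 0, c]]` of `G_γ` acts on `(α, β)` as multiplication by
`(a + b√ξ)/c` on `α + β√ξ`, one coefficient of `1, d, d²` at a time. Hence
`(x + ud + vd², y + d)` lies in the orbit of `(α, β)` exactly when `(x, y, u, v)` solves a
linear system whose determinants are `Δ = A₁B₂ - A₂B₁` and `N = A₂² - ξB₂²`. Linear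
independence of `1, α, β` forces `Δ ≠ 0`, so `(A₂, B₂) ≠ 0`, and then `N ≠ 0` because `ξ` is
not a square; so the system has exactly one solution, and it has `v ≠ 0`.
-/

lemma Matrix.det_ne_zero_of_linearIndependent_sum_smul {ι F V : Type*} [Fintype ι]
    [DecidableEq ι] [Field F] [AddCommGroup V] [Module F V] {M : Matrix ι ι F} {b : ι → V}
    (h : LinearIndependent F fun i ↦ ∑ j, M i j • b j) : M.det ≠ 0 := by
  have hrows : LinearIndependent F M.row := h.of_comp (Fintype.linearCombination F b)
  exact ((Matrix.isUnit_iff_isUnit_det M).mp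
    (Matrix.linearIndependent_rows_iff_isUnit.mp hrows)).ne_zero

lemma eq_zero_and_eq_zero_of_sq_sub_mul_sq_eq_zero {F : Type*} [Field F] {ξ a b : F}
    (hξ : ¬∃ x : F, x ^ 2 = ξ) (h : a ^ 2 - ξ * b ^ 2 = 0) : a = 0 ∧ b = 0 := by
  have hb : b = 0 := by
    by_contra hb
    exact hξ ⟨a / b, by field_simp; linear_combination h⟩
  subst hb
  exact ⟨pow_eq_zero_iff two_ne_zero |>.mp (by linear_combination h), rfl⟩

section Coordinates

variable {F E : Type*} [Field F] [Field E] [Algebra F E] {d : E}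

open Polynomial in
lemma linearIndependent_one_self_sq_of_pow_three_eq {δ : F} (hδ : ¬∃ x : F, x ^ 3 = δ)
    (hd : d ^ 3 = algebraMap F E δ) : LinearIndependent F ![1, d, d ^ 2] := by
  have hirr : Irreducible (X ^ 3 - C δ) :=
    X_pow_sub_C_irreducible_of_prime Nat.prime_three fun b hb ↦ hδ ⟨b, hb⟩
  have hmin : minpoly F d = X ^ 3 - C δ :=
    (minpoly.eq_of_irreducible_of_monic hirr (by simp [hd])
      (monic_X_pow_sub_C δ three_ne_zero)).symm
  have h := linearIndependent_pow (K := F) d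
  rw [hmin, natDegree_X_pow_sub_C] at h
  convert h using 1
  funext i
  fin_cases i <;> simp

lemma sum_smul_one_self_sq (c : Fin 3 → F) :
    ∑ i, c i • ![1, d, d ^ 2] i =
      algebraMap F E (c 0) + algebraMap F E (c 1) * d + algebraMap F E (c 2) * d ^ 2 := by
  simp [Fin.sum_univ_three, Algebra.smul_def]

lemma exists_eq_add_mul_add_mul_sq (hli : LinearIndependent F ![1, d, d ^ 2])
    (h3 : Module.finrank F E = 3) (e : E) :
    ∃ p q r : F, e = algebraMap F E p + algebraMap F E q * d + algebraMap F E r * d ^ 2 := by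
  have hspan := hli.span_eq_top_of_card_eq_finrank (by simp [h3])
  obtain ⟨c, hc⟩ := (Submodule.mem_span_range_iff_exists_fun F).mp
    (hspan ▸ Submodule.mem_top : e ∈ _)
  exact ⟨c 0, c 1, c 2, by rw [← hc, sum_smul_one_self_sq]⟩

lemma add_mul_add_mul_sq_inj (hli : LinearIndependent F ![1, d, d ^ 2]) {p q r p' q' r' : F} :
    algebraMap F E p + algebraMap F E q * d + algebraMap F E r * d ^ 2 =
        algebraMap F E p' + algebraMap F E q' * d + algebraMap F E r' * d ^ 2 ↔
      p = p' ∧ q = q' ∧ r = r' := by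
  refine ⟨fun h ↦ ?_, by rintro ⟨rfl, rfl, rfl⟩; rfl⟩
  have hc := Fintype.linearIndependent_iffₛ.mp hli ![p, q, r] ![p', q', r']
    (by simpa [sum_smul_one_self_sq] using h)
  exact ⟨hc 0, hc 1, hc 2⟩

/-- `A₁B₂ - A₂B₁` is the determinant of the coordinate matrix of `1, α, β` in the basis
`1, d, d²`. -/
lemma coord_det_ne_zero_of_linearIndependent {α β : E} {A₀ A₁ A₂ B₀ B₁ B₂ : F}
    (hα : α = algebraMap F E A₀ + algebraMap F E A₁ * d + algebraMap F E A₂ * d ^ 2)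
    (hβ : β = algebraMap F E B₀ + algebraMap F E B₁ * d + algebraMap F E B₂ * d ^ 2)
    (h : LinearIndependent F ![1, α, β]) : A₁ * B₂ - A₂ * B₁ ≠ 0 := by
  have hrows : (fun i ↦ ∑ j, !![1, 0, 0; A₀, A₁, A₂; B₀, B₁, B₂] i j • ![1, d, d ^ 2] j) =
      ![1, α, β] := by
    funext i
    fin_cases i <;> simp [sum_smul_one_self_sq, hα, hβ]
  have hM := Matrix.det_ne_zero_of_linearIndependent_sum_smul (hrows ▸ h)
  simpa [Matrix.det_fin_three] using hM

end Coordinates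

section EllipticTorus

variable {F : Type*} [Field F]

/-- The elements of `G_γ` are the `ellipticMatrix ξ a b c` with `c * (a ^ 2 - ξ * b ^ 2) ≠ 0`. -/
def ellipticMatrix (ξ a b c : F) : Matrix (Fin 3) (Fin 3) F :=
  !![a, ξ * b, 0; b, a, 0; 0, 0, c]

lemma det_ellipticMatrix (ξ a b c : F) :
    (ellipticMatrix ξ a b c).det = c * (a ^ 2 - ξ * b ^ 2) := by
  simp only [ellipticMatrix, Matrix.det_fin_three, Matrix.of_apply, Matrix.cons_val',
    Matrix.cons_val_zero, Matrix.cons_val_fin_one, Matrix.cons_val_one, Matrix.cons_val,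
    mul_zero, sub_zero, add_zero, zero_mul]
  ring

lemma eq_ellipticMatrix {ξ : F} {M : Matrix (Fin 3) (Fin 3) F}
    (hM : M 1 1 = M 0 0 ∧ M 0 1 = ξ * M 1 0 ∧
      M 0 2 = 0 ∧ M 1 2 = 0 ∧ M 2 0 = 0 ∧ M 2 1 = 0) :
    M = ellipticMatrix ξ (M 0 0) (M 1 0) (M 2 2) := by
  obtain ⟨h11, h01, h02, h12, h20, h21⟩ := hM
  ext i j
  fin_cases i <;> fin_cases j <;> simp [ellipticMatrix, *]

variable {E : Type*} [Field E] [Algebra F E]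

lemma mact_ellipticMatrix (ξ a b c : F) (w : E × E) :
    mact F E (ellipticMatrix ξ a b c) w =
      ((algebraMap F E a * w.1 + algebraMap F E ξ * algebraMap F E b * w.2) / algebraMap F E c,
       (algebraMap F E b * w.1 + algebraMap F E a * w.2) / algebraMap F E c) := by
  simp [mact, mden, ellipticMatrix]

lemma mact_ellipticMatrix_eq_iff {d : E} (hli : LinearIndependent F ![1, d, d ^ 2])
    {ξ a b c : F} (hc : c ≠ 0) {x y u v A₀ A₁ A₂ B₀ B₁ B₂ : F} :
    mact F E (ellipticMatrix ξ a b c)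
        (algebraMap F E x + algebraMap F E u * d + algebraMap F E v * d ^ 2,
          algebraMap F E y + d) =
      (algebraMap F E A₀ + algebraMap F E A₁ * d + algebraMap F E A₂ * d ^ 2,
        algebraMap F E B₀ + algebraMap F E B₁ * d + algebraMap F E B₂ * d ^ 2) ↔
    (a * x + ξ * b * y = c * A₀ ∧ a * u + ξ * b = c * A₁ ∧ a * v = c * A₂) ∧
      (b * x + a * y = c * B₀ ∧ b * u + a = c * B₁ ∧ b * v = c * B₂) := by
  have hcE : algebraMap F E c ≠ 0 := (map_ne_zero _).mpr hc
  rw [mact_ellipticMatrix, Prod.mk.injEq, div_eq_iff hcE, div_eq_iff hcE,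
    ← add_mul_add_mul_sq_inj hli, ← add_mul_add_mul_sq_inj hli]
  simp only [map_add, map_mul]
  refine Iff.and ?_ ?_ <;> constructor <;> intro h <;> linear_combination h

/-- The condition `(A₀ + A₁d + A₂d², B₀ + B₁d + B₂d²) ∈ G_γ · (x + ud + vd², y + d)` with the
group element eliminated; `ellipticMatrix ξ A₂ B₂ v` is then a witness. -/
def OrbitEquations (ξ A₀ A₁ A₂ B₀ B₁ B₂ x y u v : F) : Prop :=
  A₂ * x + ξ * B₂ * y = v * A₀ ∧ A₂ * u + ξ * B₂ = v * A₁ ∧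
    B₂ * x + A₂ * y = v * B₀ ∧ B₂ * u + A₂ = v * B₁

lemma orbitEquations_of_coord_eqns {ξ a b c x y u v A₀ A₁ A₂ B₀ B₁ B₂ : F} (hc : c ≠ 0)
    (h : (a * x + ξ * b * y = c * A₀ ∧ a * u + ξ * b = c * A₁ ∧ a * v = c * A₂) ∧
      (b * x + a * y = c * B₀ ∧ b * u + a = c * B₁ ∧ b * v = c * B₂)) :
    OrbitEquations ξ A₀ A₁ A₂ B₀ B₁ B₂ x y u v := by
  obtain ⟨⟨h₀, h₁, h₂⟩, ⟨k₀, k₁, k₂⟩⟩ := h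
  refine ⟨?_, ?_, ?_, ?_⟩ <;> refine mul_left_cancel₀ hc ?_
  · linear_combination v * h₀ - x * h₂ - ξ * y * k₂
  · linear_combination v * h₁ - u * h₂ - ξ * k₂
  · linear_combination v * k₀ - y * h₂ - x * k₂
  · linear_combination v * k₁ - h₂ - u * k₂

/-- Cramer's rule: the `(u, v)`-system has determinant `Δ = A₁B₂ - A₂B₁` and, given `v`, the
`(x, y)`-system has determinant `N = A₂² - ξB₂²`. -/
lemma exists_orbitEquations {ξ A₀ A₁ A₂ B₀ B₁ B₂ : F} (hΔ : A₁ * B₂ - A₂ * B₁ ≠ 0)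
    (hN : A₂ ^ 2 - ξ * B₂ ^ 2 ≠ 0) :
    ∃ x y u v, v ≠ 0 ∧ OrbitEquations ξ A₀ A₁ A₂ B₀ B₁ B₂ x y u v := by
  set Δ := A₁ * B₂ - A₂ * B₁
  set N := A₂ ^ 2 - ξ * B₂ ^ 2
  refine ⟨-(A₂ * A₀ - ξ * B₂ * B₀) / Δ, -(A₂ * B₀ - B₂ * A₀) / Δ, (ξ * B₁ * B₂ - A₁ * A₂) / Δ,
    -N / Δ, div_ne_zero (neg_ne_zero.mpr hN) hΔ, ?_, ?_, ?_, ?_⟩ <;>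
    field_simp <;> ring

lemma OrbitEquations.unique {ξ A₀ A₁ A₂ B₀ B₁ B₂ x y u v x' y' u' v' : F}
    (hΔ : A₁ * B₂ - A₂ * B₁ ≠ 0) (hN : A₂ ^ 2 - ξ * B₂ ^ 2 ≠ 0)
    (h : OrbitEquations ξ A₀ A₁ A₂ B₀ B₁ B₂ x y u v)
    (h' : OrbitEquations ξ A₀ A₁ A₂ B₀ B₁ B₂ x' y' u' v') :
    x = x' ∧ y = y' ∧ u = u' ∧ v = v' := by
  obtain ⟨h₀, h₁, k₀, k₁⟩ := h
  obtain ⟨h₀', h₁', k₀', k₁'⟩ := h'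
  have hv : v = v' := mul_left_cancel₀ hΔ <| by
    linear_combination B₂ * h₁' - A₂ * k₁' - B₂ * h₁ + A₂ * k₁
  subst hv
  have hu : u = u' := mul_left_cancel₀ hN <| by
    linear_combination A₂ * h₁ - ξ * B₂ * k₁ - A₂ * h₁' + ξ * B₂ * k₁'
  refine ⟨mul_left_cancel₀ hN ?_, mul_left_cancel₀ hN ?_, hu, rfl⟩
  · linear_combination A₂ * h₀ - ξ * B₂ * k₀ - A₂ * h₀' + ξ * B₂ * k₀'
  · linear_combination A₂ * k₀ - B₂ * h₀ - A₂ * k₀' + B₂ * h₀'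

end EllipticTorus

theorem fundamental_domain_second_elliptic_general (F : Type*) [Field F]
    (E : Type*) [Field E] [Algebra F E] (h3 : Module.finrank F E = 3)
    (δ : F) (hδ : ¬∃ x : F, x ^ 3 = δ) (d : E) (hd : d ^ 3 = algebraMap F E δ)
    (ξ : F) (hξ : ¬∃ x : F, x ^ 2 = ξ) :
    ∀ z ∈ UHS F E, ∃! w : E × E,
      (∃ x y u v : F, v ≠ 0 ∧
          w = (algebraMap F E x + algebraMap F E u * d + algebraMap F E v * d ^ 2,
               algebraMap F E y + d)) ∧
      ∃ m : GL (Fin 3) F,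
        (m.val 1 1 = m.val 0 0 ∧ m.val 0 1 = ξ * m.val 1 0 ∧
          m.val 0 2 = 0 ∧ m.val 1 2 = 0 ∧ m.val 2 0 = 0 ∧ m.val 2 1 = 0) ∧
        mact F E m.val w = z := by
  rintro ⟨α, β⟩ hz
  have hli := linearIndependent_one_self_sq_of_pow_three_eq hδ hd
  obtain ⟨A₀, A₁, A₂, rfl⟩ := exists_eq_add_mul_add_mul_sq hli h3 α
  obtain ⟨B₀, B₁, B₂, rfl⟩ := exists_eq_add_mul_add_mul_sq hli h3 β
  have hΔ := coord_det_ne_zero_of_linearIndependent rfl rfl hz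
  have hN : A₂ ^ 2 - ξ * B₂ ^ 2 ≠ 0 := fun h ↦ by
    obtain ⟨rfl, rfl⟩ := eq_zero_and_eq_zero_of_sq_sub_mul_sq_eq_zero hξ h
    simp at hΔ
  obtain ⟨x, y, u, v, hv, hS⟩ := exists_orbitEquations (A₀ := A₀) (B₀ := B₀) hΔ hN
  have hdet : (ellipticMatrix ξ A₂ B₂ v).det ≠ 0 := by
    rw [det_ellipticMatrix]
    exact mul_ne_zero hv hN
  refine ⟨_, ⟨⟨x, y, u, v, hv, rfl⟩, .mkOfDetNeZero _ hdet, ⟨rfl, rfl, rfl, rfl, rfl, rfl⟩,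
    (mact_ellipticMatrix_eq_iff hli hv).mpr ?_⟩, ?_⟩
  · obtain ⟨h₀, h₁, k₀, k₁⟩ := hS
    exact ⟨⟨h₀, h₁, mul_comm _ _⟩, ⟨k₀, k₁, mul_comm _ _⟩⟩
  rintro _ ⟨⟨x', y', u', v', -, rfl⟩, m, hm, hmz⟩
  have hc : m.val 2 2 ≠ 0 := fun h ↦ m.det_ne_zero <| by
    rw [eq_ellipticMatrix hm, det_ellipticMatrix, h, zero_mul]
  rw [eq_ellipticMatrix hm, mact_ellipticMatrix_eq_iff hli hc] at hmz
  obtain ⟨rfl, rfl, rfl, rfl⟩ := (orbitEquations_of_coord_eqns hc hmz).unique hΔ hN hS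
  rfl

theorem fundamental_domain_second_elliptic (F : Type*) [Field F] [Fintype F]
    (E : Type*) [Field E] [Algebra F E] (h3 : Module.finrank F E = 3)
    (δ : F) (hδ : ¬∃ x : F, x ^ 3 = δ) (d : E) (hd : d ^ 3 = algebraMap F E δ)
    (ξ : F) (hξ : ¬∃ x : F, x ^ 2 = ξ) :
    ∀ z ∈ UHS F E, ∃! w : E × E,
      (∃ x y u v : F, v ≠ 0 ∧
          w = (algebraMap F E x + algebraMap F E u * d + algebraMap F E v * d ^ 2,
               algebraMap F E y + d)) ∧
      ∃ m : GL (Fin 3) F,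
        (m.val 1 1 = m.val 0 0 ∧ m.val 0 1 = ξ * m.val 1 0 ∧
          m.val 0 2 = 0 ∧ m.val 1 2 = 0 ∧ m.val 2 0 = 0 ∧ m.val 2 1 = 0) ∧
        mact F E m.val w = z :=
  fundamental_domain_second_elliptic_general F E h3 δ hδ d hd ξ hξ
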